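/- arXiv:1311.7118 — 4 statements merged into one kernel-verified Lean document; each statement's English description precedes it below -/
import Mathlib

section
/- Let ξ ~ N(ν, σ²) be a normal random variable and let c ≤ 0. Then E[ξ − c | ξ ≤ c] ≥ E[ξ | ξ ≤ 0]. -/
open MeasureTheory ProbabilityTheory Real Set
open scoped NNReal ENNReal

lemma gauss_lr {v : ℝ≥0} (hv : v ≠ 0) {a b x y : ℝ} (hab : a ≤ b) (hxy : x ≤ y) :
    gaussianPDFReal b v x * gaussianPDFReal a v y
      ≤ gaussianPDFReal a v x * gaussianPDFReal b v y := by
  have hv' : (0:ℝ) < v := by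
    have : (0:ℝ≥0) < v := pos_iff_ne_zero.mpr hv
    exact_mod_cast this
  simp only [gaussianPDFReal]
  set C : ℝ := (√(2 * π * v))⁻¹ with hC
  have hC0 : 0 ≤ C := by positivity
  have key : rexp (- (x - b)^2 / (2 * v)) * rexp (- (y - a)^2 / (2 * v))
      ≤ rexp (- (x - a)^2 / (2 * v)) * rexp (- (y - b)^2 / (2 * v)) := by
    rw [← Real.exp_add, ← Real.exp_add]
    apply Real.exp_le_exp.mpr
    rw [← add_div, ← add_div]
    apply div_le_div_of_nonneg_right ?_ (by positivity)
    nlinarith [mul_nonneg (sub_nonneg.mpr hxy) (sub_nonneg.mpr hab)]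
  calc C * rexp (- (x - b)^2 / (2 * v)) * (C * rexp (- (y - a)^2 / (2 * v)))
      = C^2 * (rexp (- (x - b)^2 / (2 * v)) * rexp (- (y - a)^2 / (2 * v))) := by ring
    _ ≤ C^2 * (rexp (- (x - a)^2 / (2 * v)) * rexp (- (y - b)^2 / (2 * v))) := by
        apply mul_le_mul_of_nonneg_left key (by positivity)
    _ = C * rexp (- (x - a)^2 / (2 * v)) * (C * rexp (- (y - b)^2 / (2 * v))) := by ring

lemma integrable_id_mul_gaussianPDFReal (a : ℝ) {v : ℝ≥0} (hv : v ≠ 0) :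
    Integrable (fun x => x * gaussianPDFReal a v x) := by
  have hv' : (0:ℝ) < v := by
    have : (0:ℝ≥0) < v := pos_iff_ne_zero.mpr hv
    exact_mod_cast this
  have hb : (0:ℝ) < (2 * v)⁻¹ := by positivity
  have h1 : Integrable (fun y : ℝ => (y + a) * rexp (-(2 * (v:ℝ))⁻¹ * y^2)) := by
    have h2 := integrable_mul_exp_neg_mul_sq hb
    have h3 : Integrable (fun y : ℝ => a * rexp (-(2 * (v:ℝ))⁻¹ * y^2)) :=
      (integrable_exp_neg_mul_sq hb).const_mul a
    simpa [add_mul, Pi.add_def] using h2.add h3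
  have h4 := (h1.comp_sub_right a).const_mul ((√(2 * π * v))⁻¹)
  apply h4.congr
  filter_upwards with x
  simp only [gaussianPDFReal, Function.comp, sub_add_cancel]
  rw [show -(2*(v:ℝ))⁻¹ * (x-a)^2 = -(x-a)^2/(2*(v:ℝ)) by rw [div_eq_mul_inv]; ring]
  ring

lemma gauss_setIntegral_id (a : ℝ) {v : ℝ≥0} (hv : v ≠ 0) :
    ∫ x in Iic (0:ℝ), x ∂(gaussianReal a v)
      = ∫ x in Iic (0:ℝ), x * gaussianPDFReal a v x := by
  rw [gaussianReal_of_var_ne_zero _ hv]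
  rw [restrict_withDensity measurableSet_Iic]
  have : (gaussianPDF a v) = fun x => ((gaussianPDFReal a v x).toNNReal : ℝ≥0∞) := rfl
  rw [this, integral_withDensity_eq_integral_smul
    ((measurable_gaussianPDFReal a v).real_toNNReal)]
  apply setIntegral_congr_fun measurableSet_Iic
  intro x _
  simp [NNReal.smul_def, Real.coe_toNNReal _ (gaussianPDFReal_nonneg a v x), mul_comm]

lemma gauss_measure_Iic (a : ℝ) {v : ℝ≥0} (hv : v ≠ 0) :
    ((gaussianReal a v) (Iic (0:ℝ))).toReal = ∫ x in Iic (0:ℝ), gaussianPDFReal a v x := by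
  rw [gaussianReal_apply_eq_integral _ hv,
    ENNReal.toReal_ofReal (integral_nonneg (fun x => gaussianPDFReal_nonneg a v x))]

lemma gauss_denom_pos (a : ℝ) {v : ℝ≥0} (hv : v ≠ 0) :
    0 < ∫ x in Iic (0:ℝ), gaussianPDFReal a v x := by
  rw [setIntegral_pos_iff_support_of_nonneg_ae
    (ae_of_all _ (fun x => gaussianPDFReal_nonneg a v x))
    ((integrable_gaussianPDFReal a v).restrict)]
  have : Function.support (gaussianPDFReal a v) = Set.univ := by
    ext x
    simp [Function.mem_support, (gaussianPDFReal_pos a v x hv).ne']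
  rw [this, Set.univ_inter]
  simp [Real.volume_Iic]

lemma gauss_cond_mono {v : ℝ≥0} (hv : v ≠ 0) {a b : ℝ} (hab : a ≤ b) :
    (∫ x in Iic (0:ℝ), x ∂(gaussianReal a v)) / ((gaussianReal a v) (Iic (0:ℝ))).toReal
      ≤ (∫ x in Iic (0:ℝ), x ∂(gaussianReal b v)) / ((gaussianReal b v) (Iic (0:ℝ))).toReal := by
  set p : ℝ → ℝ := gaussianPDFReal a v with hp
  set q : ℝ → ℝ := gaussianPDFReal b v with hq
  rw [gauss_setIntegral_id a hv, gauss_setIntegral_id b hv, gauss_measure_Iic a hv,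
    gauss_measure_Iic b hv]
  set m : Measure ℝ := volume.restrict (Iic (0:ℝ)) with hm
  have hDa : 0 < ∫ x, p x ∂m := gauss_denom_pos a hv
  have hDb : 0 < ∫ x, q x ∂m := gauss_denom_pos b hv
  rw [div_le_div_iff₀ hDa hDb]
  -- cross-multiplied inequality via double integral
  have hpa : Integrable p m := (integrable_gaussianPDFReal a v).restrict
  have hqb : Integrable q m := (integrable_gaussianPDFReal b v).restrict
  have hxa : Integrable (fun x => x * p x) m := (integrable_id_mul_gaussianPDFReal a hv).restrict
  have hxb : Integrable (fun x => x * q x) m := (integrable_id_mul_gaussianPDFReal b hv).restrict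
  have h1 : Integrable (fun z : ℝ × ℝ => (z.1 * p z.1) * q z.2) (m.prod m) := hxa.mul_prod hqb
  have h2 : Integrable (fun z : ℝ × ℝ => (z.1 * q z.1) * p z.2) (m.prod m) := hxb.mul_prod hpa
  have e1 : (∫ x, x * p x ∂m) * ∫ x, q x ∂m
      = ∫ z : ℝ × ℝ, (z.1 * p z.1) * q z.2 ∂(m.prod m) := (integral_prod_mul _ _).symm
  have e2 : (∫ x, x * q x ∂m) * ∫ x, p x ∂m
      = ∫ z : ℝ × ℝ, (z.1 * q z.1) * p z.2 ∂(m.prod m) := (integral_prod_mul _ _).symm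
  rw [e1, e2]
  set F : ℝ × ℝ → ℝ := fun z => (z.1 * p z.1) * q z.2 with hF
  set G : ℝ × ℝ → ℝ := fun z => (z.1 * q z.1) * p z.2 with hG
  have hswap : ∫ z : ℝ × ℝ, (G z.swap - F z.swap) ∂(m.prod m)
      = ∫ z, (G z - F z) ∂(m.prod m) := integral_prod_swap (fun z : ℝ × ℝ => G z - F z)
  have hGF : Integrable (fun z => G z - F z) (m.prod m) := h2.sub h1
  have hGFs : Integrable (fun z : ℝ × ℝ => G z.swap - F z.swap) (m.prod m) := hGF.swap
  have hpt : ∀ z : ℝ × ℝ, 0 ≤ (G z - F z) + (G z.swap - F z.swap) := by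
    rintro ⟨x, y⟩
    simp only [hF, hG, Prod.swap]
    have hkey : (G (x, y) - F (x, y)) + (G (y, x) - F (y, x))
        = (x - y) * (q x * p y - p x * q y) := by simp only [hF, hG]; ring
    rcases le_total x y with hxy | hxy
    · have := gauss_lr hv hab hxy
      -- q x * p y ≤ p x * q y
      have h5 : q x * p y - p x * q y ≤ 0 := by rw [hp, hq]; nlinarith [gauss_lr hv hab hxy]
      nlinarith [mul_nonneg (neg_nonneg.mpr (sub_nonpos.mpr hxy)) (neg_nonneg.mpr h5)]
    · have h6 := gauss_lr hv hab hxy  -- q y * p x ≤ p y * q x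
      have h5 : 0 ≤ q x * p y - p x * q y := by rw [hp, hq]; nlinarith
      nlinarith [mul_nonneg (sub_nonneg.mpr hxy) h5]
  have hsum : 0 ≤ ∫ z : ℝ × ℝ, ((G z - F z) + (G z.swap - F z.swap)) ∂(m.prod m) :=
    integral_nonneg hpt
  rw [integral_add hGF hGFs, hswap, integral_sub h2 h1] at hsum
  linarith

lemma setOf_le_eq_Iic (r : ℝ) : {x : ℝ | x ≤ r} = Iic r := rfl

theorem stmt_0 (ν : ℝ) (σ2 : NNReal) (hσ : σ2 ≠ 0) (c : ℝ) (hc : c ≤ 0) :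
    (∫ x in {x : ℝ | x ≤ 0}, x ∂(gaussianReal ν σ2)) /
        ((gaussianReal ν σ2) {x : ℝ | x ≤ 0}).toReal ≤
    (∫ x in {x : ℝ | x ≤ c}, (x - c) ∂(gaussianReal ν σ2)) /
        ((gaussianReal ν σ2) {x : ℝ | x ≤ c}).toReal := by
  have hmap : (gaussianReal ν σ2).map (· + (-c)) = gaussianReal (ν - c) σ2 := by
    rw [gaussianReal_map_add_const (-c)]; ring_nf
  have hemb : MeasurableEmbedding (fun x : ℝ => x + (-c)) :=
    (Homeomorph.addRight (-c)).measurableEmbedding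
  have hpre : (fun x : ℝ => x + (-c)) ⁻¹' (Iic (0:ℝ)) = {x : ℝ | x ≤ c} := by
    ext x; simp only [Set.mem_preimage, Set.mem_Iic, Set.mem_setOf_eq]; constructor <;> intro h <;> linarith
  have hint : ∫ x in Iic (0:ℝ), x ∂(gaussianReal (ν - c) σ2)
      = ∫ x in {x : ℝ | x ≤ c}, (x - c) ∂(gaussianReal ν σ2) := by
    rw [← hmap, hemb.setIntegral_map (fun x => x) (Iic (0:ℝ)), hpre]
    apply setIntegral_congr_fun (by exact measurableSet_Iic)
    intro x _
    ring
  have hmeas : (gaussianReal (ν - c) σ2) (Iic (0:ℝ)) = (gaussianReal ν σ2) {x : ℝ | x ≤ c} := by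
    rw [← hmap, Measure.map_apply (by measurability) measurableSet_Iic, hpre]
  have h := gauss_cond_mono hσ (a := ν) (b := ν - c) (by linarith)
  rw [hint, hmeas] at h
  exact h
end

section
/- If 0 < α ≤ 1/2 and 0 < β ≤ 1/2, then α·log(α/(1−β)) + (1−α)·log((1−α)/β) ≤ log(1/β). -/
theorem stmt_2 (α β : ℝ) (hα : 0 < α) (hα2 : α ≤ 1/2) (hβ : 0 < β) (hβ2 : β ≤ 1/2) :
    α * Real.log (α / (1 - β)) + (1 - α) * Real.log ((1 - α) / β) ≤ Real.log (1 / β) := by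
  have hb1 : (0:ℝ) < 1 - β := by linarith
  have ha1 : (0:ℝ) < 1 - α := by linarith
  rw [Real.log_div hα.ne' hb1.ne', Real.log_div ha1.ne' hβ.ne',
    Real.log_div one_ne_zero hβ.ne', Real.log_one]
  have h1 : Real.log α ≤ 0 := Real.log_nonpos hα.le (by linarith)
  have h2 : Real.log (1 - α) ≤ 0 := Real.log_nonpos ha1.le (by linarith)
  have h3 : Real.log β ≤ Real.log (1 - β) := Real.log_le_log hβ (by linarith)
  nlinarith [mul_nonneg hα.le (neg_nonneg.2 h1), mul_nonneg ha1.le (neg_nonneg.2 h2),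
    mul_nonneg hα.le (sub_nonneg.2 h3)]
end

section
/- The maximal number N(p, s) of pairwise edge-disjoint stars of size s (a star being a set of s edges sharing a common vertex) in the complete graph on p vertices satisfies N(p, s) ≥ p(p−1−s)/(2s). -/
/-- A star of size `s` in the complete graph on `Fin p`: a set of `s` edges
(non-diagonal unordered pairs) all incident to a common vertex. -/
def IsStar (p s : ℕ) (A : Finset (Sym2 (Fin p))) : Prop :=
  A.card = s ∧ (∀ e ∈ A, ¬ e.IsDiag) ∧ ∃ v : Fin p, ∀ e ∈ A, v ∈ e

open Fin.NatCast in
lemma caseA (p s k : ℕ) (hs : 1 ≤ s) (hsp : s + 1 ≤ p) (hk : k + s ≤ p) :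
    ∃ F : Finset (Finset (Sym2 (Fin p))), F.card = k ∧ (∀ A ∈ F, IsStar p s A) ∧
      ((F : Set (Finset (Sym2 (Fin p)))).Pairwise fun A B => Disjoint A B) := by
  haveI : NeZero p := ⟨by omega⟩
  set star : ℕ → Finset (Sym2 (Fin p)) :=
    fun i => (Finset.Icc 1 s).image (fun t => s(((i : ℕ) : Fin p), ((i + t : ℕ) : Fin p))) with hstar
  -- membership
  have hmem : ∀ i, ∀ e, e ∈ star i ↔ ∃ t, 1 ≤ t ∧ t ≤ s ∧ e = s(((i:ℕ):Fin p), ((i+t:ℕ):Fin p)) := by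
    intro i e
    simp [hstar, Finset.mem_image, Finset.mem_Icc, and_assoc, eq_comm]
  -- disjointness
  have hdisj : ∀ i < k, ∀ j < k, i ≠ j → Disjoint (star i) (star j) := by
    intro i hi j hj hij
    rw [Finset.disjoint_left]
    intro e hei hej
    obtain ⟨t, ht1, ht2, rfl⟩ := (hmem i e).1 hei
    obtain ⟨u, hu1, hu2, he⟩ := (hmem j _).1 hej
    rw [Sym2.eq_iff] at he
    have hvc : ∀ a b : ℕ, ((a:Fin p) = (b:Fin p)) → a % p = b % p := by
      intro a b hab
      have := congrArg Fin.val hab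
      simpa [Fin.val_natCast] using this
    rcases he with ⟨h1, h2⟩ | ⟨h1, h2⟩
    · have := hvc _ _ h1
      rw [Nat.mod_eq_of_lt (by omega), Nat.mod_eq_of_lt (by omega)] at this
      omega
    · have e1 := hvc _ _ h1
      have e2 := hvc _ _ h2
      rw [Nat.mod_eq_of_lt (show i < p by omega), Nat.mod_eq_of_lt (show j + u < p by omega)] at e1
      -- e1 : i = j + u
      rw [Nat.mod_eq_of_lt (show j < p by omega)] at e2
      -- e2 : (i + t) % p = j
      rcases Nat.lt_or_ge (i + t) p with hlt | hge
      · rw [Nat.mod_eq_of_lt hlt] at e2; omega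
      · rw [Nat.mod_eq_sub_mod hge, Nat.mod_eq_of_lt (by omega)] at e2; omega
  -- each is a star
  have hstar' : ∀ i < k, IsStar p s (star i) := by
    intro i hi
    refine ⟨?_, ?_, ⟨((i:ℕ):Fin p), ?_⟩⟩
    · have hinj : Set.InjOn (fun t => s(((i:ℕ):Fin p), ((i+t:ℕ):Fin p))) (Finset.Icc 1 s) := by
        intro t ht u hu he
        simp only [Sym2.eq_iff] at he
        have hvc : ∀ a b : ℕ, ((a:Fin p) = (b:Fin p)) → a % p = b % p := by
          intro a b hab
          have := congrArg Fin.val hab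
          simpa [Fin.val_natCast] using this
        simp only [Finset.coe_Icc, Set.mem_Icc] at ht hu
        rcases he with ⟨h1, h2⟩ | ⟨h1, h2⟩
        · have := hvc _ _ h2
          rw [Nat.mod_eq_of_lt (show i + t < p by omega), Nat.mod_eq_of_lt (show i + u < p by omega)] at this
          omega
        · have := hvc _ _ h1
          rw [Nat.mod_eq_of_lt (show i < p by omega), Nat.mod_eq_of_lt (show i + u < p by omega)] at this
          omega
      rw [hstar]
      simp only []
      rw [Finset.card_image_of_injOn hinj, Nat.card_Icc]
      omega
    · intro e he
      obtain ⟨t, ht1, ht2, rfl⟩ := (hmem i e).1 he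
      rw [Sym2.mk_isDiag_iff]
      intro hd
      have := congrArg Fin.val hd
      rw [Fin.val_natCast, Fin.val_natCast, Nat.mod_eq_of_lt (show i < p by omega),
        Nat.mod_eq_of_lt (show i + t < p by omega)] at this
      omega
    · intro e he
      obtain ⟨t, ht1, ht2, rfl⟩ := (hmem i e).1 he
      exact Sym2.mem_mk_left _ _
  refine ⟨(Finset.range k).image star, ?_, ?_, ?_⟩
  · rw [Finset.card_image_of_injOn, Finset.card_range]
    intro i hi j hj hij
    by_contra hne
    simp only [Finset.coe_range, Set.mem_Iio] at hi hj
    have hd := hdisj i hi j hj hne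
    rw [hij, disjoint_self, Finset.bot_eq_empty] at hd
    have := (hstar' j hj).1
    rw [hd] at this
    simp at this
    omega
  · intro A hA
    simp only [Finset.mem_image, Finset.mem_range] at hA
    obtain ⟨i, hi, rfl⟩ := hA
    exact hstar' i hi
  · intro A hA B hB hne
    simp only [Finset.coe_image, Finset.coe_range, Set.mem_image, Set.mem_Iio] at hA hB
    obtain ⟨i, hi, rfl⟩ := hA
    obtain ⟨j, hj, rfl⟩ := hB
    exact hdisj i hi j hj (fun h => hne (by rw [h]))


lemma twice_nondiag_card (p : ℕ) :
    2 * ((Finset.univ : Finset (Sym2 (Fin p))).filter (fun e => ¬ e.IsDiag)).card = p * (p - 1) := by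
  have h1 : ((Finset.univ : Finset (Sym2 (Fin p))).filter (fun e => ¬ e.IsDiag)).card
      = Fintype.card {e : Sym2 (Fin p) // ¬ e.IsDiag} := (Fintype.card_subtype _).symm
  rw [h1, Sym2.card_subtype_not_diag, Fintype.card_fin, Nat.choose_two_right]
  rcases p with _ | q
  · simp
  · have he : Even (q * (q + 1)) := Nat.even_mul_succ_self q
    obtain ⟨m, hm⟩ := he
    have h3 : (q + 1) * (q + 1 - 1) = m + m := by
      rw [Nat.succ_sub_one, Nat.mul_comm]; exact hm
    rw [h3]
    omega

lemma double_count (p : ℕ) (R : Finset (Sym2 (Fin p))) (hR : ∀ e ∈ R, ¬ e.IsDiag) :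
    ∑ v : Fin p, (R.filter (fun e => v ∈ e)).card = 2 * R.card := by
  have h1 : ∀ v : Fin p, (R.filter (fun e => v ∈ e)).card = ∑ e ∈ R, if v ∈ e then 1 else 0 :=
    fun v => Finset.card_filter _ _
  simp only [h1]
  rw [Finset.sum_comm]
  have h2 : ∀ e ∈ R, (∑ v : Fin p, if v ∈ e then 1 else 0) = 2 := by
    intro e he
    induction e with
    | _ a b =>
      have hab : a ≠ b := by
        intro h; exact hR _ he (by rw [h]; exact Sym2.mk_isDiag_iff.2 rfl)
      have : (∑ v : Fin p, if v ∈ s(a, b) then 1 else 0)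
          = ((Finset.univ : Finset (Fin p)).filter (fun v => v ∈ s(a, b))).card :=
        (Finset.card_filter _ _).symm
      rw [this]
      have : (Finset.univ : Finset (Fin p)).filter (fun v => v ∈ s(a, b)) = {a, b} := by
        ext x
        simp [Sym2.mem_iff]
      rw [this, Finset.card_pair hab]
  rw [Finset.sum_congr rfl h2, Finset.sum_const, smul_eq_mul, Nat.mul_comm]

lemma caseB (p s : ℕ) (hs : 1 ≤ s) (hsp : s + 1 ≤ p) :
    ∀ k, 2 * k * s ≤ p * (p - s) → ∃ F : Finset (Finset (Sym2 (Fin p))),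
      F.card = k ∧ (∀ A ∈ F, IsStar p s A) ∧
      ((F : Set (Finset (Sym2 (Fin p)))).Pairwise fun A B => Disjoint A B) := by
  intro k
  induction k with
  | zero => intro _; exact ⟨∅, by simp, by simp, by simp⟩
  | succ k ih =>
    intro hbound
    obtain ⟨F, hcard, hstars, hpair⟩ := ih (by nlinarith)
    classical
    set E : Finset (Sym2 (Fin p)) := Finset.univ.filter (fun e => ¬ e.IsDiag) with hE
    set U : Finset (Sym2 (Fin p)) := F.biUnion (fun A => A) with hU
    have hUE : U ⊆ E := by
      intro e he
      rw [hU, Finset.mem_biUnion] at he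
      obtain ⟨A, hA, heA⟩ := he
      rw [hE, Finset.mem_filter]
      exact ⟨Finset.mem_univ _, (hstars A hA).2.1 e heA⟩
    have hUcard : U.card = k * s := by
      rw [hU, Finset.card_biUnion (fun A hA B hB hne => hpair hA hB hne)]
      rw [Finset.sum_congr rfl (fun A hA => (hstars A hA).1), Finset.sum_const, hcard,
        smul_eq_mul]
    set R : Finset (Sym2 (Fin p)) := E \ U with hR
    have hRnd : ∀ e ∈ R, ¬ e.IsDiag := by
      intro e he
      rw [hR, Finset.mem_sdiff, hE, Finset.mem_filter] at he
      exact he.1.2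
    have hRcard : R.card + k * s = E.card := by
      rw [hR, ← hUcard]
      exact Finset.card_sdiff_add_card_eq_card hUE
    -- find a vertex of degree ≥ s in R
    have hex : ∃ v : Fin p, s ≤ (R.filter (fun e => v ∈ e)).card := by
      by_contra hno
      push_neg at hno
      have hsum : ∑ v : Fin p, (R.filter (fun e => v ∈ e)).card ≤ p * (s - 1) := by
        calc ∑ v : Fin p, (R.filter (fun e => v ∈ e)).card
            ≤ ∑ _v : Fin p, (s - 1) :=
              Finset.sum_le_sum (fun v _ => by have := hno v; omega)
          _ = p * (s - 1) := by
              rw [Finset.sum_const, Finset.card_univ, Fintype.card_fin, smul_eq_mul]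
      rw [double_count p R hRnd] at hsum
      have hEc := twice_nondiag_card p
      rw [← hE] at hEc
      have h2R : 2 * R.card + 2 * (k * s) = p * (p - 1) := by linarith [hRcard, hEc]
      have hsplit : p * (p - 1) = p * (s - 1) + p * (p - s) := by
        rw [← Nat.mul_add]
        congr 1
        omega
      have hexp : 2 * (k + 1) * s = 2 * (k * s) + 2 * s := by ring
      rw [hexp] at hbound
      linarith [hsum, h2R, hsplit, hbound, hs]
    obtain ⟨v, hv⟩ := hex
    obtain ⟨S, hSsub, hScard⟩ := Finset.exists_subset_card_eq hv
    have hSR : S ⊆ R := hSsub.trans (Finset.filter_subset _ _)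
    have hSstar : IsStar p s S :=
      ⟨hScard, fun e he => hRnd e (hSR he),
        ⟨v, fun e he => (Finset.mem_filter.1 (hSsub he)).2⟩⟩
    have hSdisj : ∀ A ∈ F, Disjoint S A := by
      intro A hA
      rw [Finset.disjoint_left]
      intro e heS heA
      have heR := hSR heS
      rw [hR, Finset.mem_sdiff] at heR
      exact heR.2 (Finset.mem_biUnion.2 ⟨A, hA, heA⟩)
    have hSnotin : S ∉ F := by
      intro hSF
      have hne : S.Nonempty := Finset.card_pos.1 (by omega)
      obtain ⟨e, he⟩ := hne
      exact (Finset.disjoint_left.1 (hSdisj S hSF)) he he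
    refine ⟨insert S F, ?_, ?_, ?_⟩
    · rw [Finset.card_insert_of_notMem hSnotin, hcard]
    · intro A hA
      rcases Finset.mem_insert.1 hA with rfl | hA
      · exact hSstar
      · exact hstars A hA
    · rw [Finset.coe_insert]
      apply Set.Pairwise.insert hpair
      intro A hA hne
      exact ⟨hSdisj A hA, (hSdisj A hA).symm⟩


theorem stmt_4 (p s : ℕ) (hs : 1 ≤ s) (hsp : s ≤ p - 1) :
    ∃ F : Finset (Finset (Sym2 (Fin p))),
      (∀ A ∈ F, IsStar p s A) ∧
      ((F : Set (Finset (Sym2 (Fin p)))).Pairwise fun A B => Disjoint A B) ∧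
      ((p : ℝ) * (p - 1 - s)) / (2 * s) ≤ F.card := by
  have hp1 : s + 1 ≤ p := by omega
  obtain ⟨m, hm⟩ : ∃ m, p * (p - 1 - s) = m := ⟨_, rfl⟩
  set q := (m + 2 * s - 1) / (2 * s) with hq
  set r := (m + 2 * s - 1) % (2 * s) with hr
  have hdm : 2 * s * q + r = m + 2 * s - 1 := Nat.div_add_mod _ _
  have hmod : r < 2 * s := Nat.mod_lt _ (by omega)
  have hX : m + 2 * s - 1 + 1 = m + 2 * s := by omega
  have hub : 2 * s * q ≤ m + 2 * s - 1 := by linarith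
  have hlb : m ≤ 2 * s * q := by linarith
  have hcast : ((p : ℝ) * ((p : ℝ) - 1 - (s : ℝ))) / (2 * (s : ℝ)) ≤ (q : ℝ) := by
    rw [div_le_iff₀ (by positivity)]
    have e1 : p * (p - (s + 1)) = m := by rw [← hm]; congr 1; omega
    have e2 : ((m : ℕ) : ℝ) = (p : ℝ) * ((p : ℝ) - ((s : ℝ) + 1)) := by
      rw [← e1, Nat.cast_mul, Nat.cast_sub hp1]
      push_cast
      ring
    have e3 : ((m : ℕ) : ℝ) ≤ ((2 * s * q : ℕ) : ℝ) := Nat.cast_le.2 hlb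
    push_cast at e3
    linarith
  by_cases hcase : p ≤ 2 * s
  · have hq_le : q + s ≤ p := by
      obtain ⟨b, hb⟩ := Nat.exists_eq_add_of_le hp1
      have hbs : b + 1 ≤ s := by omega
      have h1 : p - 1 - s = b := by omega
      have h2 : p - s = b + 1 := by omega
      have hmle : m ≤ 2 * s * (p - s) := by
        rw [← hm, h1, h2, hb]
        nlinarith [hbs]
      have hdist : 2 * s * (p - s + 1) = 2 * s * (p - s) + 2 * s := by ring
      have hlt : 2 * s * q < 2 * s * (p - s + 1) := by linarith
      have := Nat.lt_of_mul_lt_mul_left hlt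
      omega
    obtain ⟨F, hFc, hFstar, hFpair⟩ := caseA p s q hs hp1 hq_le
    refine ⟨F, hFstar, hFpair, ?_⟩
    rw [hFc]
    exact hcast
  · have hps : p * (p - s) = m + p := by
      have h3 : p - s = (p - 1 - s) + 1 := by omega
      rw [h3, Nat.mul_add, Nat.mul_one, hm]
    have hqb : 2 * q * s ≤ p * (p - s) := by
      have hcomm : 2 * q * s = 2 * s * q := by ring
      rw [hcomm, hps]
      have : 2 * s < p := by omega
      linarith
    obtain ⟨F, hFc, hFstar, hFpair⟩ := caseB p s hs hp1 q hqb
    refine ⟨F, hFstar, hFpair, ?_⟩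
    rw [hFc]
    exact hcast
end

section
/- Let C be a symmetric class of s-subsets of {1,…,n} (each coordinate belongs to exactly c = s|C|/n members of C). Then min_{S∈C} Σ_{i∈S} b_i ≤ sm/n for every nonnegative vector b with Σᵢ bᵢ = m, with equality achieved for every S when bᵢ = m/n for all i. Consequently, if |C| ≥ 2c, the uniform allocation bᵢ = m/n maximizes min_{S∈C} Σ_{S'∈C\{S}} Σ_{i∈S△S'} b_i over all nonnegative b with ‖b‖₁ ≤ m. -/
/-- Double counting swap lemma. -/
lemma swap_count {n : ℕ} (C : Finset (Finset (Fin n))) (b : Fin n → ℝ)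
    (F : Finset (Fin n) → Finset (Fin n)) :
    ∑ S ∈ C, ∑ i ∈ F S, b i
      = ∑ i : Fin n, ((C.filter fun S => i ∈ F S).card : ℝ) * b i := by
  calc ∑ S ∈ C, ∑ i ∈ F S, b i
      = ∑ S ∈ C, ∑ i : Fin n, if i ∈ F S then b i else 0 := by
        refine Finset.sum_congr rfl fun S _ => ?_
        rw [Finset.sum_ite_mem, Finset.univ_inter]
    _ = ∑ i : Fin n, ∑ S ∈ C, if i ∈ F S then b i else 0 := Finset.sum_comm
    _ = ∑ i : Fin n, ((C.filter fun S => i ∈ F S).card : ℝ) * b i := by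
        refine Finset.sum_congr rfl fun i _ => ?_
        rw [← Finset.sum_filter, Finset.sum_const, nsmul_eq_mul]

theorem stmt_6 (n s c : ℕ) (hn : 0 < n) (C : Finset (Finset (Fin n))) (hC : C.Nonempty)
    (m : ℝ) (hm : 0 ≤ m)
    (hcard : ∀ S ∈ C, S.card = s)
    (hsymm : ∀ i : Fin n, (C.filter fun S => i ∈ S).card = c)
    (hc : c * n = s * C.card) :
    -- (a) for every nonnegative `b` summing to `m`, the minimum of `b_S` is at most `s m / n`
    (∀ b : Fin n → ℝ, (∀ i, 0 ≤ b i) → (∑ i, b i = m) →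
      ∃ S ∈ C, ∑ i ∈ S, b i ≤ (s : ℝ) * m / n) ∧
    -- (b) the uniform allocation achieves `s m / n` for every `S ∈ C`
    (∀ S ∈ C, ∑ _i ∈ S, (m / n : ℝ) = (s : ℝ) * m / n) ∧
    -- (c) if `|C| ≥ 2 c`, the uniform allocation maximizes the min objective
    (2 * c ≤ C.card →
      ∀ b : Fin n → ℝ, (∀ i, 0 ≤ b i) → (∑ i, b i ≤ m) →
        C.inf' hC (fun S => ∑ S' ∈ C.erase S, ∑ i ∈ symmDiff S S', b i) ≤
        C.inf' hC (fun S => ∑ S' ∈ C.erase S, ∑ i ∈ symmDiff S S', (m / n : ℝ))) := by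
  have hn' : (0:ℝ) < n := by exact_mod_cast hn
  have hck : c ≤ C.card := by
    have := Finset.card_filter_le C (fun S => (⟨0, hn⟩ : Fin n) ∈ S)
    rw [hsymm ⟨0, hn⟩] at this; exact this
  -- part (a), in a general form (total mass arbitrary)
  have partA : ∀ b : Fin n → ℝ, ∃ S ∈ C, ∑ i ∈ S, b i ≤ (s : ℝ) * (∑ i, b i) / n := by
    intro b
    have hsum : ∑ S ∈ C, ∑ i ∈ S, b i = ∑ S ∈ C, (s : ℝ) * (∑ i, b i) / n := by
      have hsw := swap_count C b id
      simp only [id_eq] at hsw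
      rw [hsw]
      simp only [hsymm]
      rw [← Finset.mul_sum, Finset.sum_const, nsmul_eq_mul]
      have hcC : (c : ℝ) * n = (s : ℝ) * C.card := by exact_mod_cast hc
      field_simp
      linear_combination (∑ i : Fin n, b i) * hcC
    exact Finset.exists_le_of_sum_le (f := fun S => ∑ i ∈ S, b i)
      (g := fun _ => (s:ℝ) * (∑ i, b i) / n) hC (le_of_eq hsum)
  -- the key formula for the objective
  have gform : ∀ b : Fin n → ℝ, ∀ S ∈ C,
      ∑ S' ∈ C.erase S, ∑ i ∈ symmDiff S S', b i
        = ((C.card : ℝ) - 2 * c) * (∑ i ∈ S, b i) + c * (∑ i, b i) := by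
    intro b S hS
    rw [swap_count (C.erase S) b (fun S' => symmDiff S S')]
    have h1 : ∀ i ∈ S, (((C.erase S).filter fun S' => i ∈ symmDiff S S').card : ℝ)
        = (C.card : ℝ) - c := by
      intro i hi
      have he : ((C.erase S).filter fun S' => i ∈ symmDiff S S')
          = C.filter fun S' => i ∉ S' := by
        rw [Finset.filter_erase]
        rw [show (C.filter fun S' => i ∈ symmDiff S S') = C.filter fun S' => i ∉ S' from
          Finset.filter_congr fun S' _ => by simp [Finset.mem_symmDiff, hi]]
        exact Finset.erase_eq_of_notMem (by simp [hi])
      rw [he]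
      have := Finset.card_filter_add_card_filter_not (s := C) (p := fun S' => i ∈ S')
      rw [hsymm i] at this
      have hcard' : (C.filter fun S' => i ∉ S').card = C.card - c := by omega
      rw [hcard']
      push_cast [Nat.cast_sub hck]
      ring
    have h2 : ∀ i ∉ S, (((C.erase S).filter fun S' => i ∈ symmDiff S S').card : ℝ) = c := by
      intro i hi
      have he : ((C.erase S).filter fun S' => i ∈ symmDiff S S')
          = C.filter fun S' => i ∈ S' := by
        rw [Finset.filter_erase]
        rw [show (C.filter fun S' => i ∈ symmDiff S S') = C.filter fun S' => i ∈ S' from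
          Finset.filter_congr fun S' _ => by simp [Finset.mem_symmDiff, hi]]
        exact Finset.erase_eq_of_notMem (by simp [hi])
      rw [he, hsymm i]
    rw [← Finset.sum_add_sum_compl S
      (fun i => (((C.erase S).filter fun S' => i ∈ symmDiff S S').card : ℝ) * b i)]
    have e1 : ∑ i ∈ S, (((C.erase S).filter fun S' => i ∈ symmDiff S S').card : ℝ) * b i
        = ((C.card : ℝ) - c) * ∑ i ∈ S, b i := by
      rw [Finset.mul_sum]; exact Finset.sum_congr rfl fun i hi => by rw [h1 i hi]
    have e2 : ∑ i ∈ Sᶜ, (((C.erase S).filter fun S' => i ∈ symmDiff S S').card : ℝ) * b i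
        = (c : ℝ) * ∑ i ∈ Sᶜ, b i := by
      rw [Finset.mul_sum]
      exact Finset.sum_congr rfl fun i hi => by rw [h2 i (Finset.mem_compl.mp hi)]
    rw [e1, e2]
    have e3 : ∑ i ∈ Sᶜ, b i = (∑ i, b i) - ∑ i ∈ S, b i := by
      have := Finset.sum_add_sum_compl S b
      linarith
    rw [e3]; ring
  -- part (b)
  have partB : ∀ S ∈ C, ∑ _i ∈ S, (m / n : ℝ) = (s : ℝ) * m / n := by
    intro S hS
    rw [Finset.sum_const, hcard S hS, nsmul_eq_mul]
    ring
  have hunif : ∑ i : Fin n, (m / n : ℝ) = m := by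
    rw [Finset.sum_const, Finset.card_univ, Fintype.card_fin, nsmul_eq_mul]
    field_simp
  refine ⟨fun b hb hbm => ?_, partB, fun h2c b hb hbm => ?_⟩
  · obtain ⟨S, hS, hle⟩ := partA b
    exact ⟨S, hS, by rwa [hbm] at hle⟩
  · -- part (c)
    have hK : C.inf' hC (fun S => ∑ S' ∈ C.erase S, ∑ i ∈ symmDiff S S', (m / n : ℝ))
        = ((C.card : ℝ) - 2 * c) * ((s : ℝ) * m / n) + c * m := by
      rw [Finset.inf'_congr hC rfl (fun S hS => by
        rw [gform _ S hS, partB S hS, hunif])]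
      exact Finset.inf'_const _ _
    rw [hK]
    obtain ⟨S₀, hS₀, hle⟩ := partA b
    refine le_trans (Finset.inf'_le _ hS₀) ?_
    rw [gform b S₀ hS₀]
    have h0 : (0:ℝ) ≤ (C.card : ℝ) - 2 * c := by
      have : ((2 * c : ℕ) : ℝ) ≤ (C.card : ℝ) := by exact_mod_cast h2c
      push_cast at this; linarith
    have h3 : (s : ℝ) * (∑ i, b i) / n ≤ (s : ℝ) * m / n := by
      gcongr
    have h4 : ∑ i ∈ S₀, b i ≤ (s : ℝ) * m / n := hle.trans h3
    have h5 := mul_le_mul_of_nonneg_left h4 h0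
    have h6 : (c : ℝ) * (∑ i, b i) ≤ c * m :=
      mul_le_mul_of_nonneg_left hbm (by positivity)
    linarith
end
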